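/- Fix an integer K ≥ 1 and set λ_k = c_λ K^{(p−2)/2} for all 0 ≤ k < K. Then min_{0 ≤ i < K} ‖∇f(x_i)‖ ≤ (c_λ^{1/p}/√K) · (2Δ + L (L/c_λ)^{2/(p−2)})^{(p−1)/p}. -/

import Mathlib

/-!
By the descent lemma, a gradient step of length `η` with `η L ≤ 1` decreases `f` by at least
`η ‖∇f‖² / 2`. The regularized step has length `η = (λ ‖g‖^(p-2))^(-1/(p-1))`, so `η L ≤ 1` exactly
when `L^(p-1) ≤ λ ‖g‖^(p-2)`, and then `η ‖g‖² = λ^(-1/(p-1)) ‖g‖^(p/(p-1))`. Hence either some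
gradient among the first `K` lies below this threshold, which bounds `K λ^(-1/(p-1)) ‖g‖^(p/(p-1))`
by `K L^(p/(p-2)) λ^(-2/(p-2))`, or every step decreases `f` by at least half that quantity for the
smallest gradient, and telescoping bounds `K` times it by `2Δ`. For `λ = c K^((p-2)/2)` the
threshold term is `L (L/c)^(2/(p-2))`, and solving for the gradient gives the rate.
-/

open scoped Classical
open Real RealInnerProductSpace

section LipschitzGradient

variable {E : Type*} [NormedAddCommGroup E] [InnerProductSpace ℝ E] [CompleteSpace E]
  {f : E → ℝ} {f' : E → E} {L : ℝ}

theorem descent_lemma (hf : ∀ y, HasGradientAt f (f' y) y)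
    (hlip : ∀ y z, ‖f' y - f' z‖ ≤ L * ‖y - z‖) (x v : E) :
    f (x + v) ≤ f x + ⟪f' x, v⟫ + L / 2 * ‖v‖ ^ 2 := by
  set φ : ℝ → ℝ := fun t => f (x + t • v) - t * ⟪f' x, v⟫ - L / 2 * t ^ 2 * ‖v‖ ^ 2
  have hφ : ∀ t : ℝ, HasDerivAt φ (⟪f' (x + t • v) - f' x, v⟫ - L * t * ‖v‖ ^ 2) t := by
    intro t
    have hline : HasDerivAt (fun t : ℝ => x + t • v) v t := by
      simpa using ((hasDerivAt_id t).smul_const v).const_add x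
    have hcomp := (hf (x + t • v)).hasFDerivAt.comp_hasDerivAt t hline
    simp only [Function.comp_def, InnerProductSpace.toDual_apply_apply] at hcomp
    refine ((hcomp.sub ((hasDerivAt_id t).mul_const ⟪f' x, v⟫)).sub
      (((hasDerivAt_pow 2 t).const_mul (L / 2)).mul_const (‖v‖ ^ 2))).congr_deriv ?_
    rw [inner_sub_left]
    push_cast
    ring
  have hanti : AntitoneOn φ (Set.Icc 0 1) := by
    refine antitoneOn_of_deriv_nonpos (convex_Icc 0 1)
      (fun t _ => (hφ t).continuousAt.continuousWithinAt)
      (fun t _ => (hφ t).differentiableAt.differentiableWithinAt) fun t ht => ?_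
    rw [interior_Icc] at ht
    have hdist : ‖f' (x + t • v) - f' x‖ ≤ L * (t * ‖v‖) := by
      simpa [norm_smul, abs_of_pos ht.1] using hlip (x + t • v) x
    calc deriv φ t = ⟪f' (x + t • v) - f' x, v⟫ - L * t * ‖v‖ ^ 2 := (hφ t).deriv
      _ ≤ ‖f' (x + t • v) - f' x‖ * ‖v‖ - L * t * ‖v‖ ^ 2 := by
          gcongr; exact real_inner_le_norm _ _
      _ ≤ L * (t * ‖v‖) * ‖v‖ - L * t * ‖v‖ ^ 2 := by gcongr
      _ = 0 := by ring
  have hφ01 := hanti (Set.left_mem_Icc.mpr zero_le_one) (Set.right_mem_Icc.mpr zero_le_one)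
    zero_le_one
  simp only [φ, one_smul, zero_smul, add_zero] at hφ01
  linarith

theorem gradient_step_decrease (hf : ∀ y, HasGradientAt f (f' y) y)
    (hlip : ∀ y z, ‖f' y - f' z‖ ≤ L * ‖y - z‖) (x : E) {η : ℝ} (hη : 0 ≤ η) (hηL : η * L ≤ 1) :
    f (x + -η • f' x) ≤ f x - η / 2 * ‖f' x‖ ^ 2 := by
  have h := descent_lemma hf hlip x (-η • f' x)
  rw [real_inner_smul_right, real_inner_self_eq_norm_sq, norm_smul, Real.norm_eq_abs, abs_neg,
    abs_of_nonneg hη] at h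
  nlinarith [mul_nonneg hη (sq_nonneg ‖f' x‖)]

end LipschitzGradient

theorem card_mul_le_sub_ciInf {α : Type*} {f : α → ℝ} (hbdd : BddBelow (Set.range f))
    {x : ℕ → α} {K : ℕ} {δ : ℝ} (h : ∀ k < K, δ ≤ f (x k) - f (x (k + 1))) :
    K * δ ≤ f (x 0) - ⨅ y, f y := by
  have hsum := Finset.card_nsmul_le_sum (Finset.range K) _ δ fun k hk =>
    h k (Finset.mem_range.mp hk)
  rw [Finset.sum_range_sub' (fun k => f (x k)), Finset.card_range, nsmul_eq_mul] at hsum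
  linarith [ciInf_le hbdd (x K)]

section RpowAlgebra

variable {p lam a L : ℝ}

theorem rpow_neg_inv_mul_sq (hp : p ≠ 1) (hlam : 0 < lam) (ha : 0 < a) :
    (lam * a ^ (p - 2)) ^ (-1 / (p - 1)) * a ^ 2 = lam ^ (-1 / (p - 1)) * a ^ (p / (p - 1)) := by
  have hp' : p - 1 ≠ 0 := sub_ne_zero.mpr hp
  rw [mul_rpow hlam.le (by positivity), ← rpow_mul ha.le, mul_assoc, ← rpow_natCast,
    ← rpow_add ha]
  congr 2
  field_simp
  ring

theorem rpow_neg_inv_mul_le_one {q b : ℝ} (hq : 0 < q) (hL : 0 < L) (hb : L ^ q ≤ b) :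
    b ^ (-1 / q) * L ≤ 1 := by
  have hb0 : 0 < b := (rpow_pos_of_pos hL q).trans_le hb
  have hLb : L ≤ b ^ q⁻¹ := (le_rpow_inv_iff_of_pos hL.le hb0.le hq).mpr hb
  rw [neg_div, one_div, rpow_neg hb0.le]
  exact inv_mul_le_one_of_le₀ hLb (by positivity)

theorem rpow_le_of_mul_rpow_le (hp : 2 < p) (hlam : 0 < lam) (ha : 0 ≤ a) (hL : 0 < L)
    (h : lam * a ^ (p - 2) ≤ L ^ (p - 1)) :
    lam ^ (-1 / (p - 1)) * a ^ (p / (p - 1)) ≤ L ^ (p / (p - 2)) * lam ^ (-2 / (p - 2)) := by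
  have hp1 : 0 < p - 1 := by linarith
  have hp2 : 0 < p - 2 := by linarith
  rcases ha.eq_or_lt with rfl | ha
  · rw [zero_rpow (div_pos (by linarith) hp1).ne', mul_zero]
    positivity
  -- after taking logarithms both sides are linear in `log λ`, `log a`, `log L`
  have hlog := log_le_log (by positivity) h
  rw [log_mul hlam.ne' (by positivity), log_rpow ha, log_rpow hL] at hlog
  rw [← log_le_log_iff (by positivity) (by positivity), log_mul (by positivity) (by positivity),
    log_mul (by positivity) (by positivity), log_rpow hlam, log_rpow ha, log_rpow hL,
    log_rpow hlam]
  have key : p / (p - 2) * log L + -2 / (p - 2) * log lam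
      - (-1 / (p - 1) * log lam + p / (p - 1) * log a)
      = p / ((p - 1) * (p - 2)) * ((p - 1) * log L - (log lam + (p - 2) * log a)) := by
    field_simp
    ring
  have : 0 ≤ p / ((p - 1) * (p - 2)) * ((p - 1) * log L - (log lam + (p - 2) * log a)) :=
    mul_nonneg (by positivity) (by linarith)
  linarith

theorem fixedHorizon_threshold_eq {c K : ℝ} (hp : 2 < p) (hL : 0 ≤ L) (hc : 0 < c) (hK : 0 < K) :
    K * (L ^ (p / (p - 2)) * (c * K ^ ((p - 2) / 2)) ^ (-2 / (p - 2))) =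
      L * (L / c) ^ (2 / (p - 2)) := by
  have hp2 : p - 2 ≠ 0 := by linarith
  have hsplit : p / (p - 2) = 1 + 2 / (p - 2) := by field_simp; ring
  have hK' : (K ^ ((p - 2) / 2)) ^ (-2 / (p - 2)) = K⁻¹ := by
    rw [← rpow_mul hK.le, show (p - 2) / 2 * (-2 / (p - 2)) = -1 by field_simp, rpow_neg_one]
  rw [mul_rpow hc.le (by positivity), hK', hsplit, rpow_add' hL (by positivity), rpow_one,
    div_rpow hL hc.le, neg_div, rpow_neg hc.le]
  field_simp

theorem le_of_fixedHorizon_bound {c K B : ℝ} (hp : 2 < p) (hc : 0 < c) (hK : 0 < K) (ha : 0 ≤ a)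
    (h : K * ((c * K ^ ((p - 2) / 2)) ^ (-1 / (p - 1)) * a ^ (p / (p - 1))) ≤ B) :
    a ≤ c ^ (1 / p) / √K * B ^ ((p - 1) / p) := by
  have hp0 : 0 < p := by linarith
  have hp1 : 0 < p - 1 := by linarith
  rcases ha.eq_or_lt with rfl | ha
  · have hB : 0 ≤ B := by
      rwa [zero_rpow (div_pos hp0 hp1).ne', mul_zero, mul_zero] at h
    positivity
  have hlog := log_le_log (by positivity) h
  rw [log_mul hK.ne' (by positivity), log_mul (by positivity) (by positivity),
    log_rpow (by positivity), log_mul hc.ne' (by positivity), log_rpow hK, log_rpow ha] at hlog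
  have hB : 0 < B := lt_of_lt_of_le (by positivity) h
  rw [← log_le_log_iff ha (by positivity), log_mul (by positivity) (by positivity),
    log_div (by positivity) (by positivity), log_rpow hc, log_sqrt hK.le, log_rpow hB]
  have key : 1 / p * log c - log K / 2 + (p - 1) / p * log B - log a =
      (p - 1) / p * (log B - (log K + (-1 / (p - 1) * (log c + (p - 2) / 2 * log K)
        + p / (p - 1) * log a))) := by
    field_simp
    ring
  have : 0 ≤ (p - 1) / p * (log B - (log K + (-1 / (p - 1) * (log c + (p - 2) / 2 * log K)
        + p / (p - 1) * log a))) := mul_nonneg (by positivity) (by linarith)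
  linarith

end RpowAlgebra

section RegularizedStep

variable {E : Type*} [NormedAddCommGroup E] [InnerProductSpace ℝ E] [CompleteSpace E]
  {f : E → ℝ} {f' : E → E} {L p : ℝ}

noncomputable def horStep (f' : E → E) (lam p : ℝ) (y : E) : E :=
  if f' y = 0 then 0 else -((lam * ‖f' y‖ ^ (p - 2)) ^ (-(1 : ℝ) / (p - 1))) • f' y

theorem horStep_decrease (hf : ∀ y, HasGradientAt f (f' y) y)
    (hlip : ∀ y z, ‖f' y - f' z‖ ≤ L * ‖y - z‖) (hL : 0 < L) (hp : 2 < p) {lam : ℝ}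
    (hlam : 0 < lam) {y : E} (hy : L ^ (p - 1) ≤ lam * ‖f' y‖ ^ (p - 2)) :
    f (y + horStep f' lam p y) ≤ f y - lam ^ (-1 / (p - 1)) * ‖f' y‖ ^ (p / (p - 1)) / 2 := by
  have hp1 : 0 < p - 1 := by linarith
  have hg : 0 < ‖f' y‖ := by
    by_contra! h0
    rw [norm_le_zero_iff.mp h0, norm_zero, zero_rpow (by linarith), mul_zero] at hy
    exact (rpow_pos_of_pos hL _).not_ge hy
  have hstep := gradient_step_decrease hf hlip y (rpow_nonneg (by positivity) (-1 / (p - 1)))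
    (rpow_neg_inv_mul_le_one hp1 hL hy)
  rw [horStep, if_neg (norm_pos_iff.mp hg)]
  linarith [rpow_neg_inv_mul_sq (by linarith : 1 < p).ne' hlam hg]

theorem exists_mul_rpow_le_of_horStep (hf : ∀ y, HasGradientAt f (f' y) y)
    (hlip : ∀ y z, ‖f' y - f' z‖ ≤ L * ‖y - z‖) (hbdd : BddBelow (Set.range f)) (hL : 0 < L)
    (hp : 2 < p) {lam : ℝ} (hlam : 0 < lam) {K : ℕ} (hK : 0 < K) {x : ℕ → E}
    (hx : ∀ k < K, x (k + 1) = x k + horStep f' lam p (x k)) :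
    ∃ i < K, K * (lam ^ (-1 / (p - 1)) * ‖f' (x i)‖ ^ (p / (p - 1))) ≤
      2 * (f (x 0) - ⨅ y, f y) + K * (L ^ (p / (p - 2)) * lam ^ (-2 / (p - 2))) := by
  have hΔ : 0 ≤ f (x 0) - ⨅ y, f y := sub_nonneg.mpr (ciInf_le hbdd _)
  have hW : 0 ≤ (K : ℝ) * (L ^ (p / (p - 2)) * lam ^ (-2 / (p - 2))) := by positivity
  by_cases hsmall : ∃ i < K, lam * ‖f' (x i)‖ ^ (p - 2) ≤ L ^ (p - 1)
  · obtain ⟨i, hi, hle⟩ := hsmall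
    refine ⟨i, hi, ?_⟩
    have hsmall := rpow_le_of_mul_rpow_le hp hlam (norm_nonneg _) hL hle
    linarith [mul_le_mul_of_nonneg_left hsmall (Nat.cast_nonneg K)]
  push Not at hsmall
  obtain ⟨i, hi, hmin⟩ := (Finset.range K).exists_min_image (fun k => ‖f' (x k)‖)
    (Finset.nonempty_range_iff.mpr hK.ne')
  rw [Finset.mem_range] at hi
  refine ⟨i, hi, ?_⟩
  have hdecr : ∀ k < K,
      lam ^ (-1 / (p - 1)) * ‖f' (x i)‖ ^ (p / (p - 1)) / 2 ≤ f (x k) - f (x (k + 1)) := by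
    intro k hk
    have hstep := horStep_decrease hf hlip hL hp hlam (hsmall k hk).le
    rw [← hx k hk] at hstep
    have hp1 : 0 < p - 1 := by linarith
    have hmono : ‖f' (x i)‖ ^ (p / (p - 1)) ≤ ‖f' (x k)‖ ^ (p / (p - 1)) := by
      gcongr
      exact hmin k (Finset.mem_range.mpr hk)
    linarith [mul_le_mul_of_nonneg_left hmono (rpow_nonneg hlam.le (-1 / (p - 1)))]
  linarith [card_mul_le_sub_ciInf hbdd hdecr]

end RegularizedStep

/-- Fixed-horizon rate with `λ_k = c_λ K^{(p-2)/2}` for `0 ≤ k < K`: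
`min_{0 ≤ i < K} ‖∇f(x_i)‖ ≤ (c_λ^{1/p}/√K) (2Δ + L (L/c_λ)^{2/(p-2)})^{(p-1)/p}`. -/
theorem hor_gd_rate_fixed_horizon
    {E : Type*} [NormedAddCommGroup E] [InnerProductSpace ℝ E] [CompleteSpace E]
    (f : E → ℝ) (f' : E → E)
    (hf : ∀ y, HasGradientAt f (f' y) y)
    (L : ℝ) (hL : 0 < L)
    (hlip : ∀ y z, ‖f' y - f' z‖ ≤ L * ‖y - z‖)
    (hbdd : BddBelow (Set.range f))
    (p : ℝ) (hp : 2 < p)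
    (c : ℝ) (hc : 0 < c)
    (K : ℕ) (hK : 1 ≤ K)
    (lam : ℕ → ℝ) (hlam : ∀ k < K, lam k = c * (K : ℝ) ^ ((p - 2) / 2))
    (x s : ℕ → E)
    (hs : ∀ k, s k = if f' (x k) = 0 then 0
      else -((lam k * ‖f' (x k)‖ ^ (p - 2)) ^ (-(1 : ℝ) / (p - 1))) • f' (x k))
    (hx : ∀ k, x (k + 1) = x k + s k)
    (Δ : ℝ) (hΔ : Δ = f (x 0) - ⨅ y, f y) :
    (Finset.range K).inf' (Finset.nonempty_range_iff.mpr (by omega))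
        (fun i => ‖f' (x i)‖) ≤
      c ^ ((1 : ℝ) / p) / Real.sqrt K *
        (2 * Δ + L * (L / c) ^ (2 / (p - 2))) ^ ((p - 1) / p) := by
  have hK0 : (0 : ℝ) < K := by exact_mod_cast hK
  obtain ⟨i, hi, hbound⟩ := exists_mul_rpow_le_of_horStep hf hlip hbdd hL hp
    (lam := c * (K : ℝ) ^ ((p - 2) / 2)) (by positivity) hK (x := x)
    fun k hk => by rw [hx, hs, hlam k hk]; rfl
  rw [fixedHorizon_threshold_eq hp hL.le hc hK0, ← hΔ] at hbound
  exact (Finset.inf'_le _ (Finset.mem_range.mpr hi)).trans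
    (le_of_fixedHorizon_bound hp hc hK0 (norm_nonneg _) hbound)
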